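/- For the exponential CDF F(z) = 1 − e^{−λz} and fixed δ ∈ (0,1), the integral I(G) = ∫₀^∞ z² (1 − e^{−λz/δ})^{G−1} λe^{−λz} dz satisfies I(G) ≤ C (log G)² G^{−δ} for some constant C = C(λ, δ) and all G ≥ 2. -/

import Mathlib

open MeasureTheory Real Set Filter Topology

/-!
Split the integral at `T = (δ / l) log G`, where `e^{-l T} = G^{-δ}`.
Below `T`, with `x = e^{-l z / δ}` one has `(1 - x)^{G-1} ≤ e^{-(G-1) x} ≤ 1 / ((G-1) x)`, so the
integrand is at most `T² l e^{(l/δ - l) z} / (G - 1)`; its integral over `(0, T]` is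
`O(T² e^{(l/δ - l) T} / G) = O(T² G^{1-δ} / G)`. Above `T` drop the factor `(1 - x)^{G-1} ≤ 1`:
the tail of the second moment of `Exp(l)` is `(T² + 2T/l + 2/l²) e^{-l T}`.
Both pieces are `O((log G)² G^{-δ})`.
-/

lemma self_lt_div_of_lt_one {l δ : ℝ} (hl : 0 < l) (hδ₀ : 0 < δ) (hδ₁ : δ < 1) : l < l / δ := by
  rw [lt_div_iff₀ hδ₀]
  nlinarith

lemma one_sub_pow_le_inv_mul {x : ℝ} (hx₀ : 0 < x) (hx₁ : x ≤ 1) {n : ℕ} (hn : 0 < n) :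
    (1 - x) ^ n ≤ (n * x)⁻¹ := by
  have hnx : 0 < (n : ℝ) * x := by positivity
  calc (1 - x) ^ n ≤ exp (-x) ^ n := pow_le_pow_left₀ (by linarith) (one_sub_le_exp_neg x) n
    _ = (exp (n * x))⁻¹ := by rw [← exp_nat_mul, ← exp_neg, mul_neg]
    _ ≤ (n * x)⁻¹ := inv_anti₀ hnx (by linarith [add_one_le_exp ((n : ℝ) * x)])

lemma setIntegral_Ioc_exp_mul_le {c : ℝ} (hc : 0 < c) {T : ℝ} (hT : 0 ≤ T) :
    ∫ z in Ioc 0 T, exp (c * z) ≤ exp (c * T) / c := by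
  rw [← intervalIntegral.integral_of_le hT, intervalIntegral.integral_comp_mul_left exp hc.ne',
    integral_exp, mul_zero, exp_zero, smul_eq_mul, inv_mul_eq_div]
  gcongr
  linarith

/-- `∫_T^∞ z² · l e^{-l z} dz`, the tail of the second moment of `Exp(l)`. -/
noncomputable def secondMomentTail (l T : ℝ) : ℝ := (T ^ 2 + 2 * T / l + 2 / l ^ 2) * exp (-l * T)

section SecondMoment

variable {l : ℝ}

lemma hasDerivAt_neg_secondMomentTail (hl : l ≠ 0) (z : ℝ) :
    HasDerivAt (fun T => -secondMomentTail l T) (z ^ 2 * (l * exp (-l * z))) z := by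
  have hpoly : HasDerivAt (fun T : ℝ => T ^ 2 + 2 * T / l + 2 / l ^ 2) (2 * z + 2 / l) z :=
    ((((hasDerivAt_pow 2 z).add (((hasDerivAt_id z).const_mul 2).div_const l))).add_const
      (2 / l ^ 2)).congr_deriv (by simp)
  have hexp : HasDerivAt (fun T : ℝ => exp (-l * T)) (exp (-l * z) * -l) z := by
    simpa using ((hasDerivAt_id z).const_mul (-l)).exp
  unfold secondMomentTail
  exact (hpoly.mul hexp).neg.congr_deriv (by field_simp; ring)

lemma tendsto_secondMomentTail_atTop (hl : 0 < l) :
    Tendsto (secondMomentTail l) atTop (𝓝 0) := by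
  have hmoment (k : ℕ) : Tendsto (fun T : ℝ => T ^ k * exp (-l * T)) atTop (𝓝 0) := by
    simpa [rpow_natCast] using tendsto_rpow_mul_exp_neg_mul_atTop_nhds_zero k l hl
  convert ((hmoment 2).add ((hmoment 1).const_mul (2 / l))).add ((hmoment 0).const_mul (2 / l ^ 2))
    using 1
  · ext T
    simp only [secondMomentTail]
    ring
  · simp

lemma integrableOn_Ioi_sq_mul_exp_neg (hl : 0 < l) (a : ℝ) :
    IntegrableOn (fun z => z ^ 2 * (l * exp (-l * z))) (Ioi a) :=
  integrableOn_Ioi_deriv_of_nonneg' (fun z _ => hasDerivAt_neg_secondMomentTail hl.ne' z)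
    (fun z _ => by positivity) (tendsto_secondMomentTail_atTop hl).neg

lemma integral_Ioi_sq_mul_exp_neg (hl : 0 < l) (a : ℝ) :
    ∫ z in Ioi a, z ^ 2 * (l * exp (-l * z)) = secondMomentTail l a := by
  rw [integral_Ioi_of_hasDerivAt_of_nonneg' (fun z _ => hasDerivAt_neg_secondMomentTail hl.ne' z)
    (fun z _ => by positivity) (tendsto_secondMomentTail_atTop hl).neg]
  ring

end SecondMoment

noncomputable def escapeMassIntegrand (l δ : ℝ) (n : ℕ) (z : ℝ) : ℝ :=
  z ^ 2 * (1 - exp (-l * z / δ)) ^ n * (l * exp (-l * z))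

section EscapeMass

variable {l δ : ℝ} {n : ℕ}

lemma exp_neg_mul_div_mem_Ioc (hl : 0 ≤ l) (hδ : 0 ≤ δ) {z : ℝ} (hz : 0 ≤ z) :
    exp (-l * z / δ) ∈ Ioc 0 1 :=
  ⟨exp_pos _, exp_le_one_iff.2 (div_nonpos_of_nonpos_of_nonneg (by nlinarith) hδ)⟩

lemma escapeMassIntegrand_nonneg (hl : 0 ≤ l) (hδ : 0 ≤ δ) {z : ℝ} (hz : 0 ≤ z) :
    0 ≤ escapeMassIntegrand l δ n z := by
  have : 0 ≤ 1 - exp (-l * z / δ) := sub_nonneg.2 (exp_neg_mul_div_mem_Ioc hl hδ hz).2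
  unfold escapeMassIntegrand
  positivity

lemma escapeMassIntegrand_le (hl : 0 ≤ l) (hδ : 0 ≤ δ) {z : ℝ} (hz : 0 ≤ z) :
    escapeMassIntegrand l δ n z ≤ z ^ 2 * (l * exp (-l * z)) := by
  obtain ⟨hx₀, hx₁⟩ := exp_neg_mul_div_mem_Ioc hl hδ hz
  unfold escapeMassIntegrand
  have : (1 - exp (-l * z / δ)) ^ n ≤ 1 := pow_le_one₀ (by linarith) (by linarith)
  calc _ ≤ z ^ 2 * 1 * (l * exp (-l * z)) := by gcongr
    _ = _ := by ring

lemma escapeMassIntegrand_le_of_le (hl : 0 ≤ l) (hδ : 0 ≤ δ) (hn : 0 < n) {z T : ℝ} (hz : 0 ≤ z)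
    (hzT : z ≤ T) :
    escapeMassIntegrand l δ n z ≤ T ^ 2 * l / n * exp ((l / δ - l) * z) := by
  obtain ⟨hx₀, hx₁⟩ := exp_neg_mul_div_mem_Ioc hl hδ hz
  have hpow := one_sub_pow_le_inv_mul hx₀ hx₁ hn
  have hexp : (exp (-l * z / δ))⁻¹ * exp (-l * z) = exp ((l / δ - l) * z) := by
    rw [← exp_neg, ← exp_add]
    ring_nf
  unfold escapeMassIntegrand
  calc _ ≤ T ^ 2 * (n * exp (-l * z / δ))⁻¹ * (l * exp (-l * z)) := by
        gcongr
    _ = T ^ 2 * l / n * exp ((l / δ - l) * z) := by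
        rw [← hexp]
        ring

lemma continuous_escapeMassIntegrand : Continuous (escapeMassIntegrand l δ n) := by
  unfold escapeMassIntegrand
  fun_prop

lemma integrableOn_Ioi_escapeMassIntegrand (hl : 0 < l) (hδ : 0 ≤ δ) {a : ℝ} (ha : 0 ≤ a) :
    IntegrableOn (escapeMassIntegrand l δ n) (Ioi a) := by
  refine (integrableOn_Ioi_sq_mul_exp_neg hl a).mono'
    continuous_escapeMassIntegrand.aestronglyMeasurable.restrict ?_
  refine (ae_restrict_iff' measurableSet_Ioi).2 (Eventually.of_forall fun z hz => ?_)
  have hz : 0 ≤ z := ha.trans (le_of_lt hz)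
  rw [norm_of_nonneg (escapeMassIntegrand_nonneg hl.le hδ hz)]
  exact escapeMassIntegrand_le hl.le hδ hz

lemma integral_escapeMassIntegrand_le (hl : 0 < l) (hδ₀ : 0 < δ) (hδ₁ : δ < 1) (hn : 0 < n)
    {T : ℝ} (hT : 0 ≤ T) :
    ∫ z in Ioi 0, escapeMassIntegrand l δ n z ≤
      T ^ 2 * l / n * (exp ((l / δ - l) * T) / (l / δ - l)) + secondMomentTail l T := by
  have hc : 0 < l / δ - l := sub_pos.2 (self_lt_div_of_lt_one hl hδ₀ hδ₁)
  have hint := integrableOn_Ioi_escapeMassIntegrand (n := n) hl hδ₀.le le_rfl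
  have hhead : ∫ z in Ioc 0 T, escapeMassIntegrand l δ n z ≤
      T ^ 2 * l / n * (exp ((l / δ - l) * T) / (l / δ - l)) :=
    calc _ ≤ ∫ z in Ioc 0 T, T ^ 2 * l / n * exp ((l / δ - l) * z) :=
          setIntegral_mono_on (hint.mono_set Ioc_subset_Ioi_self)
            (Continuous.integrableOn_Ioc (by fun_prop)) measurableSet_Ioc
            fun z hz => escapeMassIntegrand_le_of_le hl.le hδ₀.le hn hz.1.le hz.2
      _ ≤ _ := by
          rw [integral_const_mul]
          gcongr
          exact setIntegral_Ioc_exp_mul_le hc hT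
  have htail : ∫ z in Ioi T, escapeMassIntegrand l δ n z ≤ secondMomentTail l T := by
    rw [← integral_Ioi_sq_mul_exp_neg hl T]
    exact setIntegral_mono_on (integrableOn_Ioi_escapeMassIntegrand hl hδ₀.le hT)
      (integrableOn_Ioi_sq_mul_exp_neg hl T) measurableSet_Ioi
      fun z hz => escapeMassIntegrand_le hl.le hδ₀.le (hT.trans hz.le)
  rw [← Ioc_union_Ioi_eq_Ioi hT, setIntegral_union (Ioc_disjoint_Ioi le_rfl) measurableSet_Ioi
    (hint.mono_set Ioc_subset_Ioi_self) (hint.mono_set (Ioi_subset_Ioi hT))]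
  exact add_le_add hhead htail

end EscapeMass

lemma quadratic_le_mul_sq {a b d L₀ L : ℝ} (hb : 0 ≤ b) (hd : 0 ≤ d) (hL₀ : 0 < L₀)
    (hL : L₀ ≤ L) : a * L ^ 2 + b * L + d ≤ (a + b / L₀ + d / L₀ ^ 2) * L ^ 2 := by
  have hbL : b * L ≤ b / L₀ * L ^ 2 := by
    rw [div_mul_eq_mul_div, le_div_iff₀ hL₀]
    nlinarith [mul_le_mul_of_nonneg_left hL (mul_nonneg hb (hL₀.le.trans hL))]
  have hdL : d ≤ d / L₀ ^ 2 * L ^ 2 := by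
    rw [div_mul_eq_mul_div, le_div_iff₀ (by positivity)]
    nlinarith [pow_le_pow_left₀ hL₀.le hL 2]
  linarith

lemma integral_escapeMassIntegrand_le_log {l δ : ℝ} (hl : 0 < l) (hδ₀ : 0 < δ) (hδ₁ : δ < 1)
    {G : ℕ} (hG : 2 ≤ G) :
    ∫ z in Ioi 0, escapeMassIntegrand l δ (G - 1) z ≤
      ((2 * δ ^ 2 / (l * (l / δ - l)) + δ ^ 2 / l ^ 2) * log G ^ 2 + 2 * δ / l ^ 2 * log G
        + 2 / l ^ 2) * (G : ℝ) ^ (-δ) := by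
  have hG₂ : (2 : ℝ) ≤ G := by exact_mod_cast hG
  have hG₀ : (0 : ℝ) < G := by linarith
  have hc : 0 < l / δ - l := sub_pos.2 (self_lt_div_of_lt_one hl hδ₀ hδ₁)
  have hL : 0 ≤ log G := log_nonneg (by linarith)
  have hpow : (G : ℝ) ^ (-δ) = exp (-(δ * log G)) := by rw [rpow_def_of_pos hG₀]; ring_nf
  have hcast : ((G - 1 : ℕ) : ℝ) = G - 1 := by rw [Nat.cast_sub (by omega), Nat.cast_one]
  have hgrowth : exp ((l / δ - l) * (δ * log G / l)) = G * (G : ℝ) ^ (-δ) := by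
    rw [hpow, ← exp_log hG₀, ← exp_add, log_exp]
    congr 1
    field_simp
    ring
  have hdecay : exp (-l * (δ * log G / l)) = (G : ℝ) ^ (-δ) := by
    rw [hpow]
    congr 1
    field_simp
  have hratio : (G : ℝ) / (G - 1) ≤ 2 := by
    rw [div_le_iff₀ (by linarith)]
    linarith
  have hT : 0 ≤ δ * log G / l := by positivity
  refine (integral_escapeMassIntegrand_le hl hδ₀ hδ₁ (by omega) hT).trans ?_
  rw [hcast, hgrowth, secondMomentTail, hdecay]
  have hhead : (δ * log G / l) ^ 2 * l / (G - 1) * (G * (G : ℝ) ^ (-δ) / (l / δ - l)) =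
      δ ^ 2 / (l * (l / δ - l)) * log G ^ 2 * (G : ℝ) ^ (-δ) * (G / (G - 1)) := by
    field_simp
  rw [hhead]
  have : δ ^ 2 / (l * (l / δ - l)) * log G ^ 2 * (G : ℝ) ^ (-δ) * (G / (G - 1)) ≤
      δ ^ 2 / (l * (l / δ - l)) * log G ^ 2 * (G : ℝ) ^ (-δ) * 2 := by gcongr
  refine le_of_le_of_eq (add_le_add_left this _) ?_
  field_simp
  ring

/-- Upper-bound half of the Laplace rate lemma: for the exponential model, the preserved
mass integral satisfies `I(G) ≤ C (log G)² G^{-δ}` for all `G ≥ 2`. -/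
theorem stmt_17 (l δ : ℝ) (hl : 0 < l) (hδ : δ ∈ Set.Ioo (0 : ℝ) 1) :
    ∃ C : ℝ, 0 < C ∧ ∀ G : ℕ, 2 ≤ G →
      (∫ z in Set.Ioi (0 : ℝ),
          z ^ 2 * (1 - Real.exp (-l * z / δ)) ^ (G - 1) * (l * Real.exp (-l * z))) ≤
        C * (Real.log G) ^ 2 * (G : ℝ) ^ (-δ) := by
  obtain ⟨hδ₀, hδ₁⟩ := hδ
  have hc : 0 < l / δ - l := sub_pos.2 (self_lt_div_of_lt_one hl hδ₀ hδ₁)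
  have hlog₂ : 0 < log 2 := log_pos one_lt_two
  refine ⟨2 * δ ^ 2 / (l * (l / δ - l)) + δ ^ 2 / l ^ 2 + 2 * δ / l ^ 2 / log 2
    + 2 / l ^ 2 / log 2 ^ 2, by positivity, fun G hG => ?_⟩
  have hL : log 2 ≤ log G := log_le_log two_pos (by exact_mod_cast hG)
  calc _ ≤ _ := integral_escapeMassIntegrand_le_log hl hδ₀ hδ₁ hG
    _ ≤ _ := by
        gcongr
        exact quadratic_le_mul_sq (by positivity) (by positivity) hlog₂ hL
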